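/- Work in ℂ² ⊗ ℂ² ⊗ ℂ² and let λ, μ ∈ ℂ with λ ≠ 0 and λ ≠ μ. Then the linear span S_{P,λ,μ} of the Parthasarathy space S_P together with the van der Monde vectors z_λ and z_μ contains infinitely many distinct one-dimensional subspaces spanned by product vectors; in particular, S_{P,λ,μ} is not a quasi-completely entangled subspace. -/

import Mathlib

noncomputable section

abbrev Q : Type := EuclideanSpace ℂ (Fin 2)
abbrev Q3 : Type := EuclideanSpace ℂ (Fin 2 × Fin 2 × Fin 2)

/-- standard basis vector of ℂ² -/
def ket2 (i : Fin 2) : Q := EuclideanSpace.single i 1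

/-- elementary tensor of three qubit vectors, in ℂ² ⊗ ℂ² ⊗ ℂ² ≅ ℂ⁸ -/
def tp3 (u v w : Q) : Q3 := WithLp.toLp 2 (fun p : Fin 2 × Fin 2 × Fin 2 => u p.1 * v p.2.1 * w p.2.2)

/-- the set of one-dimensional subspaces of `T` spanned by (nonzero) product vectors -/
def prodLines3 (T : Submodule ℂ Q3) : Set (Submodule ℂ Q3) :=
  {L | ∃ ξ : Q3, ξ ≠ 0 ∧ ξ ∈ T ∧ (∃ u v w : Q, ξ = tp3 u v w) ∧ L = Submodule.span ℂ {ξ}}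

/-- the van der Monde vector z_λ = (|0⟩ + λ|1⟩)^{⊗3} -/
def zq3 (lam : ℂ) : Q3 :=
  tp3 (ket2 0 + lam • ket2 1) (ket2 0 + lam • ket2 1) (ket2 0 + lam • ket2 1)

/-- the van der Monde vector z_∞ = |1⟩ ⊗ |1⟩ ⊗ |1⟩ -/
def zq3inf : Q3 := tp3 (ket2 1) (ket2 1) (ket2 1)

/-- the span of all van der Monde vectors -/
def Fq3 : Submodule ℂ Q3 := Submodule.span ℂ (insert zq3inf (Set.range zq3))

/-- the Parthasarathy completely entangled subspace of the three-qubit system -/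
def SPq3 : Submodule ℂ Q3 := Fq3ᗮ

/-! The pairing of `zq3 ν = a_ν ⊗ a_ν ⊗ a_ν`, where `a_ν = |0⟩ + ν|1⟩`, with a product vector
`u ⊗ v ⊗ w` is `⟪a_ν, u⟫ ⟪a_ν, v⟫ ⟪a_ν, w⟫`, and all of `F` is spanned by such cubes `b ⊗ b ⊗ b`.
Over a primitive cube root of unity `ω` we have `X³ + c³Y³ = ∏ₖ (X + ωᵏcY)`, so the product vector
`⊗ₖ (a_λ + ωᵏc a_μ)` pairs with every cube exactly as `z_λ + c³ z_μ` does; it therefore differs from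
`z_λ + c³ z_μ` by a vector of `S_P`. Pairing with `b ⊗ b ⊗ b` for `b ⟂ a_μ` and for `b ⟂ a_λ`
recovers `c³` from the line it spans, so `c = 0, 1, 2, …` give infinitely many distinct lines. -/

open scoped ComplexInnerProductSpace

namespace Parthasarathy

def vdm (ν : ℂ) : Q := ket2 0 + ν • ket2 1

lemma inner_tp3 (a b c u v w : Q) : ⟪tp3 a b c, tp3 u v w⟫ = ⟪a, u⟫ * ⟪b, v⟫ * ⟪c, w⟫ := by
  simp only [tp3, PiLp.inner_apply, RCLike.inner_apply, Fintype.sum_prod_type, Fin.sum_univ_two,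
    map_mul]
  ring

def primCubeRoot : ℂ := Complex.exp (2 * Real.pi * Complex.I / 3)

lemma one_add_primCubeRoot_add_sq : 1 + primCubeRoot + primCubeRoot ^ 2 = 0 := by
  have h := (Complex.isPrimitiveRoot_exp 3 (by norm_num)).geom_sum_eq_zero (by norm_num)
  simpa [Finset.sum_range_succ, primCubeRoot] using h

lemma factor_sum_of_cubes (x y c : ℂ) :
    (x + c * y) * (x + primCubeRoot * c * y) * (x + primCubeRoot ^ 2 * c * y) =
      x ^ 3 + c ^ 3 * y ^ 3 := by
  linear_combination (c * x ^ 2 * y + primCubeRoot * c ^ 2 * x * y ^ 2 +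
    (primCubeRoot - 1) * c ^ 3 * y ^ 3) * one_add_primCubeRoot_add_sq

def cubeSumFactor (p q : Q) (c : ℂ) : Q3 :=
  tp3 (p + c • q) (p + (primCubeRoot * c) • q) (p + (primCubeRoot ^ 2 * c) • q)

lemma inner_cube_cubeSumFactor (b p q : Q) (c : ℂ) :
    ⟪tp3 b b b, cubeSumFactor p q c⟫ = ⟪b, p⟫ ^ 3 + c ^ 3 * ⟪b, q⟫ ^ 3 := by
  simp only [cubeSumFactor, inner_tp3, inner_add_right, inner_smul_right]
  exact factor_sum_of_cubes _ _ c

lemma mem_SPq3_of_inner_cube_eq_zero {x : Q3} (hx : ∀ b : Q, ⟪tp3 b b b, x⟫ = 0) : x ∈ SPq3 := by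
  rw [SPq3, Fq3, Submodule.mem_orthogonal]
  intro z hz
  induction hz using Submodule.span_induction with
  | mem g hg =>
    rcases hg with rfl | ⟨ν, rfl⟩
    · exact hx (ket2 1)
    · exact hx (vdm ν)
  | zero => exact inner_zero_left x
  | add y z _ _ hy hz => rw [inner_add_left, hy, hz, add_zero]
  | smul a y _ hy => rw [inner_smul_left, hy, mul_zero]

lemma cubeSumFactor_sub_mem_SPq3 (p q : Q) (c : ℂ) :
    cubeSumFactor p q c - tp3 p p p - c ^ 3 • tp3 q q q ∈ SPq3 := by
  refine mem_SPq3_of_inner_cube_eq_zero fun b => ?_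
  simp only [inner_sub_right, inner_smul_right, inner_cube_cubeSumFactor, inner_tp3]
  ring

lemma cubeSumFactor_mem_sup (lam mu c : ℂ) :
    cubeSumFactor (vdm lam) (vdm mu) c ∈
      SPq3 ⊔ Submodule.span ℂ {zq3 lam} ⊔ Submodule.span ℂ {zq3 mu} := by
  have hdecomp : cubeSumFactor (vdm lam) (vdm mu) c =
      (cubeSumFactor (vdm lam) (vdm mu) c - zq3 lam - c ^ 3 • zq3 mu) + zq3 lam +
        c ^ 3 • zq3 mu := by
    abel
  rw [hdecomp]
  refine add_mem (add_mem ?_ ?_) ?_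
  · exact Submodule.mem_sup_left (Submodule.mem_sup_left (cubeSumFactor_sub_mem_SPq3 _ _ c))
  · exact Submodule.mem_sup_left (Submodule.mem_sup_right (Submodule.mem_span_singleton_self _))
  · exact Submodule.mem_sup_right (Submodule.smul_mem _ _ (Submodule.mem_span_singleton_self _))

def vdmPerp (μ : ℂ) : Q := ket2 1 - (starRingEnd ℂ μ) • ket2 0

lemma inner_vdmPerp_vdm (μ ν : ℂ) : ⟪vdmPerp μ, vdm ν⟫ = ν - μ := by
  simp [vdmPerp, vdm, ket2, EuclideanSpace.inner_single_left]
  ring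

lemma cubeSumFactor_vdm_ne_zero {lam mu : ℂ} (hne : lam ≠ mu) (c : ℂ) :
    cubeSumFactor (vdm lam) (vdm mu) c ≠ 0 := by
  intro h
  have key := inner_cube_cubeSumFactor (vdmPerp mu) (vdm lam) (vdm mu) c
  rw [h, inner_zero_right, inner_vdmPerp_vdm, inner_vdmPerp_vdm, sub_self] at key
  exact pow_ne_zero 3 (sub_ne_zero.2 hne) (by simpa using key.symm)

lemma cube_eq_of_smul_cubeSumFactor_eq {lam mu c c' t : ℂ} (hne : lam ≠ mu)
    (h : t • cubeSumFactor (vdm lam) (vdm mu) c' = cubeSumFactor (vdm lam) (vdm mu) c) :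
    c ^ 3 = c' ^ 3 := by
  have hpair : ∀ b : Q, t * ⟪tp3 b b b, cubeSumFactor (vdm lam) (vdm mu) c'⟫ =
      ⟪tp3 b b b, cubeSumFactor (vdm lam) (vdm mu) c⟫ := fun b => by
    rw [← h, inner_smul_right]
  have hmu := hpair (vdmPerp mu)
  have hlam := hpair (vdmPerp lam)
  simp only [inner_cube_cubeSumFactor, inner_vdmPerp_vdm, sub_self] at hmu hlam
  have hd : (lam - mu) ^ 3 ≠ 0 := pow_ne_zero 3 (sub_ne_zero.2 hne)
  have ht : t = 1 := by
    apply mul_right_cancel₀ hd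
    linear_combination hmu
  subst ht
  apply mul_right_cancel₀ hd
  linear_combination hlam

lemma span_cubeSumFactor_natCast_injective {lam mu : ℂ} (hne : lam ≠ mu) :
    Function.Injective fun n : ℕ => Submodule.span ℂ {cubeSumFactor (vdm lam) (vdm mu) n} := by
  intro n m h
  obtain ⟨t, ht⟩ := Submodule.span_singleton_eq_span_singleton.1 h
  have hcube : ((n ^ 3 : ℕ) : ℂ) = (m ^ 3 : ℕ) := by
    push_cast
    exact (cube_eq_of_smul_cubeSumFactor_eq hne ht).symm
  exact Nat.pow_left_injective (by norm_num) (Nat.cast_injective hcube)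

end Parthasarathy

open Parthasarathy in
theorem statement19_general (lam mu : ℂ) (hne : lam ≠ mu) :
    (prodLines3 (SPq3 ⊔ Submodule.span ℂ {zq3 lam} ⊔ Submodule.span ℂ {zq3 mu})).Infinite := by
  refine Set.infinite_of_injective_forall_mem (span_cubeSumFactor_natCast_injective hne) fun n => ?_
  exact ⟨_, cubeSumFactor_vdm_ne_zero hne n, cubeSumFactor_mem_sup lam mu n, ⟨_, _, _, rfl⟩, rfl⟩

theorem statement19 (lam mu : ℂ) (h0 : lam ≠ 0) (hne : lam ≠ mu) :
    (prodLines3 (SPq3 ⊔ Submodule.span ℂ {zq3 lam} ⊔ Submodule.span ℂ {zq3 mu})).Infinite :=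
  statement19_general lam mu hne
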